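/- Let K be a kernel with CDF K̄, h > 0, τ ∈ (0,1), and ℓ_h = ρ_τ * K_h the convolution-smoothed quantile loss, where ρ_τ(u) = u(τ − 𝟙{u<0}) and K_h(u) = (1/h)K(u/h). If K is continuous with ∫K = 1 and ∫|v|K(v)dv < ∞, then ℓ_h is differentiable with ℓ_h′(u) = τ − K̄(−u/h) for all u ∈ ℝ; in particular ℓ_h is convex. -/

import Mathlib

open MeasureTheory

/-- The quantile check function ρ_τ. -/
noncomputable def checkFn (τ u : ℝ) : ℝ := u * (τ - if u < 0 then 1 else 0)

lemma checkFn_eq (τ u : ℝ) : checkFn τ u = u * τ - min u 0 := by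
  unfold checkFn
  by_cases hu : u < 0
  · rw [if_pos hu, min_eq_left hu.le]; ring
  · rw [if_neg hu, min_eq_right (not_lt.1 hu)]; ring

lemma checkFn_cont (τ : ℝ) : Continuous (checkFn τ) := by
  have : checkFn τ = fun u => u * τ - min u 0 := funext (checkFn_eq τ)
  rw [this]
  exact (continuous_id.mul continuous_const).sub (continuous_id.min continuous_const)

lemma checkFn_lip (τ : ℝ) (hτ : τ ∈ Set.Ioo (0:ℝ) 1) (a b : ℝ) :
    |checkFn τ a - checkFn τ b| ≤ |a - b| := by
  obtain ⟨h0, h1⟩ := hτ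
  rw [checkFn_eq, checkFn_eq]
  rcases le_or_gt a 0 with ha | ha <;> rcases le_or_gt b 0 with hb | hb
  · rw [min_eq_left ha, min_eq_left hb]
    rw [abs_le]; constructor <;> cases' abs_cases (a - b) with hc hc <;> nlinarith
  · rw [min_eq_left ha, min_eq_right hb.le]
    rw [abs_le]; constructor <;> cases' abs_cases (a - b) with hc hc <;> nlinarith
  · rw [min_eq_right ha.le, min_eq_left hb]
    rw [abs_le]; constructor <;> cases' abs_cases (a - b) with hc hc <;> nlinarith
  · rw [min_eq_right ha.le, min_eq_right hb.le]
    rw [abs_le]; constructor <;> cases' abs_cases (a - b) with hc hc <;> nlinarith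

lemma abs_checkFn_le (τ : ℝ) (hτ : τ ∈ Set.Ioo (0:ℝ) 1) (u : ℝ) : |checkFn τ u| ≤ |u| := by
  have := checkFn_lip τ hτ u 0
  simpa [checkFn] using this

theorem smoothed_loss_deriv_and_convex (τ h : ℝ)
    (hτ : τ ∈ Set.Ioo (0:ℝ) 1) (hh : 0 < h)
    (K : ℝ → ℝ) (hKc : Continuous K) (hKnn : ∀ v, 0 ≤ K v)
    (hK1 : ∫ v : ℝ, K v = 1)
    (hmom : Integrable (fun v : ℝ => |v| * K v)) :
    (∀ u : ℝ, HasDerivAt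
        (fun w : ℝ => ∫ v : ℝ, checkFn τ v * ((1/h) * K ((v - w)/h)))
        (τ - ∫ t in Set.Iic (-(u/h)), K t) u) ∧
    ConvexOn ℝ Set.univ
      (fun w : ℝ => ∫ v : ℝ, checkFn τ v * ((1/h) * K ((v - w)/h))) := by
  have hKint : Integrable K := by
    by_contra hc
    rw [integral_undef hc] at hK1; norm_num at hK1
  -- change of variables
  have hcov : ∀ w : ℝ, (∫ v : ℝ, checkFn τ v * ((1/h) * K ((v - w)/h)))
      = ∫ t : ℝ, checkFn τ (w + h * t) * K t := by
    intro w
    set g : ℝ → ℝ := fun x => checkFn τ (x + w) * ((1/h) * K (x/h)) with hg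
    have e1 : (∫ v : ℝ, checkFn τ v * ((1/h) * K ((v - w)/h))) = ∫ v : ℝ, g (v + -w) := by
      congr 1; funext v; simp [hg, sub_eq_add_neg]
    rw [e1, integral_add_right_eq_self]
    have e2 : (∫ x : ℝ, g x) = |h| • ∫ x : ℝ, g (h * x) := by
      rw [Measure.integral_comp_mul_left g h, smul_smul]
      rw [abs_inv, mul_inv_cancel₀ (by positivity), one_smul]
    rw [e2, ← integral_smul]
    congr 1; funext t
    have : h * t / h = t := by field_simp
    simp only [hg, this, smul_eq_mul, abs_of_pos hh]
    rw [add_comm (h*t) w]; field_simp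
  -- integrability of the integrand at any point u
  have hFint : ∀ u : ℝ, Integrable (fun t : ℝ => checkFn τ (u + h * t) * K t) := by
    intro u
    have hmeas : AEStronglyMeasurable (fun t : ℝ => checkFn τ (u + h * t) * K t) volume :=
      (((checkFn_cont τ).comp (continuous_const.add (continuous_const.mul continuous_id))).mul
        hKc).aestronglyMeasurable
    have hdom : Integrable (fun t : ℝ => |u| * K t + h * (|t| * K t)) :=
      (hKint.const_mul _).add (hmom.const_mul _)
    refine hdom.mono hmeas (Filter.Eventually.of_forall fun t => ?_)
    have h1 : |checkFn τ (u + h * t) * K t| ≤ |u + h * t| * K t := by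
      rw [abs_mul, abs_of_nonneg (hKnn t)]
      exact mul_le_mul_of_nonneg_right (abs_checkFn_le τ hτ _) (hKnn t)
    have h2 : |u + h * t| * K t ≤ (|u| + h * |t|) * K t := by
      refine mul_le_mul_of_nonneg_right ((abs_add_le _ _).trans ?_) (hKnn t)
      rw [abs_mul, abs_of_pos hh]
    have h3 : 0 ≤ |u| * K t + h * (|t| * K t) :=
      add_nonneg (mul_nonneg (abs_nonneg _) (hKnn t))
        (mul_nonneg hh.le (mul_nonneg (abs_nonneg _) (hKnn t)))
    rw [Real.norm_eq_abs, Real.norm_eq_abs, abs_of_nonneg h3]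
    calc |checkFn τ (u + h * t) * K t| ≤ (|u| + h * |t|) * K t := h1.trans h2
      _ = |u| * K t + h * (|t| * K t) := by ring
  -- the key derivative fact
  have key : ∀ u : ℝ, HasDerivAt (fun w : ℝ => ∫ t : ℝ, checkFn τ (w + h * t) * K t)
      (τ - ∫ t in Set.Iic (-(u/h)), K t) u := by
    intro u
    have hmes : ∀ᶠ w in nhds u, AEStronglyMeasurable
        (fun t : ℝ => checkFn τ (w + h * t) * K t) volume :=
      Filter.Eventually.of_forall fun w =>
        (((checkFn_cont τ).comp (continuous_const.add (continuous_const.mul continuous_id))).mul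
          hKc).aestronglyMeasurable
    have hF'meas : AEStronglyMeasurable
        (fun t : ℝ => (τ - if u + h * t < 0 then (1:ℝ) else 0) * K t) volume := by
      refine ((measurable_const.sub (Measurable.ite ?_ measurable_const
        measurable_const)).mul hKc.measurable).aestronglyMeasurable
      exact measurableSet_lt (measurable_const.add (measurable_const.mul measurable_id))
        measurable_const
    have hlip : ∀ᵐ t : ℝ, LipschitzOnWith (Real.nnabs (K t))
        (fun w : ℝ => checkFn τ (w + h * t) * K t) (Metric.ball u 1) := by
      refine Filter.Eventually.of_forall fun t => ?_
      refine LipschitzOnWith.of_dist_le_mul fun x _ y _ => ?_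
      rw [Real.dist_eq, Real.dist_eq, Real.coe_nnabs, ← sub_mul, abs_mul,
        abs_of_nonneg (hKnn t)]
      rw [mul_comm (K t)]
      refine mul_le_mul_of_nonneg_right ?_ (hKnn t)
      have := checkFn_lip τ hτ (x + h * t) (y + h * t)
      simpa using this
    have hnull : volume {t : ℝ | u + h * t = 0} = 0 := by
      have : {t : ℝ | u + h * t = 0} = {-(u/h)} := by
        ext t
        simp only [Set.mem_setOf_eq, Set.mem_singleton_iff]
        constructor
        · intro ht; field_simp; linarith
        · intro ht; rw [ht]; field_simp; ring
      rw [this, Real.volume_singleton]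
    have hdiff : ∀ᵐ t : ℝ, HasDerivAt (fun w : ℝ => checkFn τ (w + h * t) * K t)
        ((τ - if u + h * t < 0 then (1:ℝ) else 0) * K t) u := by
      rw [ae_iff]
      refine measure_mono_null (fun t ht => ?_) hnull
      simp only [Set.mem_setOf_eq] at ht ⊢
      by_contra hne
      apply ht
      rcases lt_or_gt_of_ne hne with hneg | hpos
      · rw [if_pos hneg]
        have hev : ∀ᶠ w in nhds u, checkFn τ (w + h * t) * K t
            = (fun w : ℝ => (w + h * t) * ((τ - 1) * K t)) w := by
          have hc : Continuous fun w : ℝ => w + h * t := continuous_id.add continuous_const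
          have := hc.continuousAt (x := u) |>.eventually (eventually_lt_nhds hneg)
          filter_upwards [this] with w hw
          unfold checkFn
          rw [if_pos hw]; ring
        have hd : HasDerivAt (fun w : ℝ => (w + h * t) * ((τ - 1) * K t))
            ((τ - 1) * K t) u := by
          simpa using ((hasDerivAt_id u).add_const (h * t)).mul_const ((τ - 1) * K t)
        exact hd.congr_of_eventuallyEq hev
      · rw [if_neg (not_lt.2 hpos.le)]
        have hev : ∀ᶠ w in nhds u, checkFn τ (w + h * t) * K t
            = (fun w : ℝ => (w + h * t) * ((τ - 0) * K t)) w := by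
          have hc : Continuous fun w : ℝ => w + h * t := continuous_id.add continuous_const
          have := hc.continuousAt (x := u) |>.eventually (eventually_gt_nhds hpos)
          filter_upwards [this] with w hw
          unfold checkFn
          rw [if_neg (not_lt.2 hw.le)]; ring
        have hd : HasDerivAt (fun w : ℝ => (w + h * t) * ((τ - 0) * K t))
            ((τ - 0) * K t) u := by
          simpa using ((hasDerivAt_id u).add_const (h * t)).mul_const ((τ - 0) * K t)
        exact hd.congr_of_eventuallyEq hev
    have main := hasDerivAt_integral_of_dominated_loc_of_lip (F := fun w t =>
        checkFn τ (w + h * t) * K t)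
        (F' := fun t => (τ - if u + h * t < 0 then (1:ℝ) else 0) * K t)
        (bound := K) (Metric.ball_mem_nhds u one_pos) hmes (hFint u) hF'meas hlip hKint hdiff
    have hval : (∫ t : ℝ, (τ - if u + h * t < 0 then (1:ℝ) else 0) * K t)
        = τ - ∫ t in Set.Iic (-(u/h)), K t := by
      have hsplit : (fun t : ℝ => (τ - if u + h * t < 0 then (1:ℝ) else 0) * K t)
          = fun t : ℝ => τ * K t - Set.indicator (Set.Iio (-(u/h))) K t := by
        funext t
        have hiff : u + h * t < 0 ↔ t < -(u/h) := by
          rw [show -(u/h) = -u/h by rw [neg_div], lt_div_iff₀ hh]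
          constructor <;> intro <;> linarith [mul_comm t h]
        by_cases ht : u + h * t < 0
        · rw [if_pos ht, Set.indicator_of_mem (Set.mem_Iio.2 (hiff.1 ht))]; ring
        · rw [if_neg ht, Set.indicator_of_notMem (by
            simp only [Set.mem_Iio]; exact fun hc => ht (hiff.2 hc))]; ring
      rw [hsplit, integral_sub (hKint.const_mul τ)
        (hKint.indicator measurableSet_Iio), integral_const_mul τ K, hK1, mul_one,
        integral_indicator measurableSet_Iio, ← integral_Iic_eq_integral_Iio]
    rw [← hval]
    exact main.2
  have hfun : (fun w : ℝ => ∫ v : ℝ, checkFn τ v * ((1/h) * K ((v - w)/h)))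
      = fun w : ℝ => ∫ t : ℝ, checkFn τ (w + h * t) * K t := funext hcov
  constructor
  · intro u; rw [hfun]; exact key u
  · rw [hfun]
    have hd : Differentiable ℝ (fun w : ℝ => ∫ t : ℝ, checkFn τ (w + h * t) * K t) :=
      fun u => (key u).differentiableAt
    refine MonotoneOn.convexOn_of_deriv convex_univ hd.continuous.continuousOn
      (by rw [interior_univ]; exact hd.differentiableOn) ?_
    rw [interior_univ]
    intro a _ b _ hab
    rw [(key a).deriv, (key b).deriv]
    have hmono : (∫ t in Set.Iic (-(b/h)), K t) ≤ ∫ t in Set.Iic (-(a/h)), K t := by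
      refine setIntegral_mono_set hKint.integrableOn
        (Filter.Eventually.of_forall hKnn) ?_
      refine HasSubset.Subset.eventuallyLE (Set.Iic_subset_Iic.2 ?_)
      apply neg_le_neg
      gcongr
    linarith
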